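/- Let n be a power of two, B a power of two dividing n, X ∈ ℂ^n, and G ∈ ℂ^n symmetric about zero (G_{−t} = G_t for all t ∈ [n]). Let σ ∈ [n] be odd and Δ ∈ [n], and let U ∈ ℂ^B be the (n,B,G,σ,Δ)-hashing of X. Then the Fourier transform of U satisfies, for every b ∈ [B]: Û_b = Σ_{f∈[n]} X̂_f · Ĝ_{σf − b·(n/B)} · ω_n^{σΔf}. -/

import Mathlib

open Finset

/-- Discrete Fourier transform of a length-`n` signal, with `1/n` normalization:
`X̂_f = (1/n) ∑_t X_t ω_n^{-ft}`. -/
noncomputable def dft (n : ℕ) [NeZero n] (X : ZMod n → ℂ) : ZMod n → ℂ :=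
  fun f => (n : ℂ)⁻¹ * ∑ t : ZMod n, X t *
    Complex.exp (-(2 * Real.pi * Complex.I) * ((f * t).val : ℂ) / (n : ℂ))

/-- The `(n,B,G,σ,Δ)`-hashing of `X`:
`U_j = (B/n) ∑_{i ∈ [n/B]} X_{σ(Δ+j+B·i)} G_{j+B·i}` for `j ∈ [B]`. -/
noncomputable def hashing (n B : ℕ) [NeZero (n / B)] (X G : ZMod n → ℂ)
    (σ Δ : ZMod n) : ZMod B → ℂ :=
  fun j => (B : ℂ) / (n : ℂ) * ∑ i : ZMod (n / B),
    X (σ * (Δ + (j.val : ZMod n) + (B : ZMod n) * (i.val : ZMod n))) *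
      G ((j.val : ZMod n) + (B : ZMod n) * (i.val : ZMod n))


/-!
Writing `Y_t = X_{σ(Δ+t)} G_t`, the hashed signal is `B/n` times the `B`-periodic folding of `Y`,
and folding in time is subsampling in frequency: `Û_b = Ŷ_{(n/B) b}`. Expanding `X` by Fourier
inversion, `Ŷ_c = ∑_f X̂_f ω_n^{σΔf} Ĝ_{c - σf}`, and the symmetry of `G` makes `Ĝ` even.
-/

open ZMod (stdAddChar)
open scoped ZMod

section

variable {n : ℕ} [NeZero n]

theorem dft_eq_inv_mul_dft (X : ZMod n → ℂ) : dft n X = fun f => (n : ℂ)⁻¹ * 𝓕 X f := by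
  funext f
  simp only [dft, ZMod.dft_apply, smul_eq_mul]
  congr 1
  refine sum_congr rfl fun t _ => ?_
  rw [mul_comm (X t), mul_comm f t, AddChar.map_neg_eq_inv, ZMod.stdAddChar_apply,
    ZMod.toCircle_apply, ← Complex.exp_neg, neg_mul, neg_div]

theorem dft_apply_eq_sum (X : ZMod n → ℂ) (f : ZMod n) :
    dft n X f = (n : ℂ)⁻¹ * ∑ t, stdAddChar (-(t * f)) * X t := by
  simp only [dft_eq_inv_mul_dft, ZMod.dft_apply, smul_eq_mul]

theorem sum_dft_mul_stdAddChar (X : ZMod n → ℂ) (w : ZMod n) :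
    ∑ f, dft n X f * stdAddChar (f * w) = X w := by
  conv_rhs => rw [← (𝓕 : (ZMod n → ℂ) ≃ₗ[ℂ] _).symm_apply_apply X, ZMod.invDFT_apply,
    smul_eq_mul, mul_sum]
  simp only [dft_eq_inv_mul_dft, smul_eq_mul]
  exact sum_congr rfl fun f _ => by ring

theorem dft_neg_of_even {G : ZMod n → ℂ} (hG : G.Even) (f : ZMod n) :
    dft n G (-f) = dft n G f := by
  simp only [dft_eq_inv_mul_dft, ZMod.dft_even_iff.mpr hG f]

theorem dft_mul_comp_affine (X G : ZMod n → ℂ) (s a c : ZMod n) :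
    dft n (fun t => X (s * t + a) * G t) c =
      ∑ f, dft n X f * stdAddChar (a * f) * dft n G (c - s * f) := by
  have hchar : ∀ f t : ZMod n, stdAddChar (-(t * c)) * stdAddChar (f * (s * t + a)) =
      stdAddChar (a * f) * stdAddChar (-(t * (c - s * f))) := fun f t => by
    rw [← AddChar.map_add_eq_mul, ← AddChar.map_add_eq_mul]; ring_nf
  simp only [dft_apply_eq_sum _ c, dft_apply_eq_sum G, ← sum_dft_mul_stdAddChar X (s * _ + a),
    sum_mul, mul_sum]
  rw [sum_comm]
  refine sum_congr rfl fun f _ => sum_congr rfl fun t _ => ?_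
  linear_combination (n⁻¹ * G t * dft n X f) * hchar f t

end

section

variable {n B m : ℕ} [NeZero n] [NeZero B]

theorem stdAddChar_natCast_mul_intCast (hnm : n = B * m) (k : ℤ) :
    stdAddChar ((m : ZMod n) * (k : ZMod n)) = stdAddChar (k : ZMod B) := by
  have hm : (m : ℂ) ≠ 0 := by
    have := NeZero.ne n
    rw [hnm] at this
    exact_mod_cast right_ne_zero_of_mul this
  rw [← Int.cast_natCast, ← Int.cast_mul, ZMod.stdAddChar_coe, ZMod.stdAddChar_coe, hnm]
  congr 1
  push_cast
  field_simp

variable [NeZero m]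

theorem bijective_val_add_mul_val (hnm : n = B * m) :
    Function.Bijective fun p : ZMod B × ZMod m =>
      (p.1.val : ZMod n) + (B : ZMod n) * (p.2.val : ZMod n) := by
  have hval : ∀ p : ZMod B × ZMod m,
      ((p.1.val : ZMod n) + (B : ZMod n) * (p.2.val : ZMod n)).val = p.1.val + B * p.2.val := by
    intro p
    norm_cast
    refine ZMod.val_cast_of_lt ?_
    calc p.1.val + B * p.2.val < B + B * p.2.val := by gcongr; exact ZMod.val_lt p.1
      _ = B * (p.2.val + 1) := by ring
      _ ≤ B * m := by gcongr; exact ZMod.val_lt p.2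
      _ = n := hnm.symm
  rw [Fintype.bijective_iff_injective_and_card]
  refine ⟨fun p q hpq => ?_, by simp [ZMod.card, hnm]⟩
  have h := congrArg ZMod.val hpq
  simp only [hval] at h
  have hB : 0 < B := Nat.pos_of_neZero B
  have h1 : p.1.val = q.1.val := by
    simpa [Nat.add_mul_mod_self_left, Nat.mod_eq_of_lt (ZMod.val_lt _)] using congrArg (· % B) h
  have h2 : p.2.val = q.2.val := by
    simpa [Nat.add_mul_div_left _ _ hB, Nat.div_eq_of_lt (ZMod.val_lt _)] using congrArg (· / B) h
  exact Prod.ext (ZMod.val_injective _ h1) (ZMod.val_injective _ h2)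

theorem dft_aliasing (hnm : n = B * m) (Y : ZMod n → ℂ) (b : ZMod B) :
    dft B (fun j => (B : ℂ) / n *
        ∑ i : ZMod m, Y ((j.val : ZMod n) + (B : ZMod n) * (i.val : ZMod n))) b =
      dft n Y ((m : ZMod n) * (b.val : ZMod n)) := by
  have hBm : (B : ZMod n) * m = 0 := by rw [← Nat.cast_mul, ← hnm, ZMod.natCast_self]
  have hchar : ∀ (j : ZMod B) (i : ZMod m),
      stdAddChar (-(((j.val : ZMod n) + (B : ZMod n) * (i.val : ZMod n)) *
        ((m : ZMod n) * (b.val : ZMod n)))) = stdAddChar (-(j * b)) := fun j i => by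
    have hn : -(((j.val : ZMod n) + (B : ZMod n) * (i.val : ZMod n)) *
        ((m : ZMod n) * (b.val : ZMod n))) =
        (m : ZMod n) * ((-(j.val * b.val : ℤ) : ℤ) : ZMod n) := by
      push_cast
      linear_combination (-(i.val * b.val : ZMod n)) * hBm
    have hB : -(j * b) = ((-(j.val * b.val : ℤ) : ℤ) : ZMod B) := by
      push_cast
      simp only [ZMod.natCast_val, ZMod.cast_id', id]
    rw [hn, hB, stdAddChar_natCast_mul_intCast hnm]
  rw [dft_apply_eq_sum, dft_apply_eq_sum,
    ← (bijective_val_add_mul_val hnm).sum_comp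
      fun t => stdAddChar (-(t * ((m : ZMod n) * (b.val : ZMod n)))) * Y t,
    Fintype.sum_prod_type, mul_sum, mul_sum]
  refine sum_congr rfl fun j _ => ?_
  simp only [hchar, ← mul_sum]
  have hB : (B : ℂ) ≠ 0 := NeZero.ne _
  field_simp

end

theorem dft_hashing_general (n B : ℕ) [NeZero n] [NeZero B] [NeZero (n / B)]
    (hBn : B ∣ n)
    (X G : ZMod n → ℂ) (hGsymm : ∀ t : ZMod n, G (-t) = G t)
    (σ Δ : ZMod n) (b : ZMod B) :
    dft B (hashing n B X G σ Δ) b =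
      ∑ f : ZMod n,
        dft n X f * dft n G (σ * f - ((n / B : ℕ) : ZMod n) * (b.val : ZMod n)) *
          Complex.exp (2 * Real.pi * Complex.I * ((σ * Δ * f).val : ℂ) / (n : ℂ)) := by
  set Y : ZMod n → ℂ := fun t => X (σ * t + σ * Δ) * G t
  have hhash : hashing n B X G σ Δ = fun j => (B : ℂ) / n * ∑ i : ZMod (n / B),
      Y ((j.val : ZMod n) + B * (i.val : ZMod n)) := by
    funext j
    simp only [hashing]
    congr 1
    refine sum_congr rfl fun i _ => ?_
    simp only [Y]
    congr 2
    ring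
  rw [hhash, dft_aliasing (Nat.mul_div_cancel' hBn).symm Y, dft_mul_comp_affine]
  refine sum_congr rfl fun f _ => ?_
  rw [← dft_neg_of_even hGsymm, neg_sub, ZMod.stdAddChar_apply, ZMod.toCircle_apply,
    mul_right_comm]

/-- Fourier transform of a hashed signal: for `G` symmetric about zero,
`Û_b = ∑_{f ∈ [n]} X̂_f Ĝ_{σf − b·(n/B)} ω_n^{σΔf}`. -/
theorem dft_hashing (n B : ℕ) [NeZero n] [NeZero B] [NeZero (n / B)]
    (hn : ∃ k, n = 2 ^ k) (hB : ∃ k, B = 2 ^ k) (hBn : B ∣ n)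
    (X G : ZMod n → ℂ) (hGsymm : ∀ t : ZMod n, G (-t) = G t)
    (σ Δ : ZMod n) (hσ : σ.val % 2 = 1) (b : ZMod B) :
    dft B (hashing n B X G σ Δ) b =
      ∑ f : ZMod n,
        dft n X f * dft n G (σ * f - ((n / B : ℕ) : ZMod n) * (b.val : ZMod n)) *
          Complex.exp (2 * Real.pi * Complex.I * ((σ * Δ * f).val : ℂ) / (n : ℂ)) :=
  dft_hashing_general n B hBn X G hGsymm σ Δ b
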